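/- Let n ≥ 1, p ∈ [1,∞], and suppose u, G satisfy ‖u(t)‖_{L^∞} ≤ C₀ t^{−n/2}, ‖G(t)‖_{L^∞} ≤ C₀ t^{−n/2}, and ‖u(t) − M G(t)‖_{L^p} ≤ C₀ t^{−(n/2)(1−1/p)−1/2} log(2+t) for t ≥ 1. Then there is C > 0 with ‖ |u(t)|^{2/n}u(t) − |M G(t)|^{2/n} M G(t) ‖_{L^p} ≤ C t^{−(n/2)(1−1/p)−3/2} log(2+t) for all t ≥ 1. -/

import Mathlib

open Real MeasureTheory ENNReal

/-! The map `s ↦ |s| ^ α * s` has derivative `(1 + α) * |s| ^ α`, hence is Lipschitz with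
constant `(1 + α) * R ^ α` on `[-R, R]`. The `L^∞` bounds give `R ≍ t ^ (-n / 2)`, so for
`α = 2 / n` the Lipschitz constant is `≍ t⁻¹`, and composing with it turns the decay rate of
`u - M G` in `L^p` into the claimed one. -/

theorem rpow_sub_rpow_mul_le {α x y : ℝ} (hα : 0 ≤ α) (hy : 0 ≤ y) (hyx : y ≤ x) :
    (x ^ α - y ^ α) * y ≤ α * x ^ α * (x - y) := by
  rcases hy.eq_or_lt with rfl | hy
  · simp only [mul_zero, sub_zero]
    have := rpow_nonneg hyx α
    positivity
  have hx : 0 < x := hy.trans_le hyx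
  -- Bernoulli's inequality at `y / x` is the tangent-line bound for `s ↦ s ^ (α + 1)` at `x`.
  have tangent : x ^ α * x + (α + 1) * x ^ α * (y - x) ≤ y ^ α * y := by
    have bernoulli := one_add_mul_self_le_rpow_one_add (s := y / x - 1)
      (by linarith [div_nonneg hy.le hx.le]) (p := α + 1) (by linarith)
    rw [add_sub_cancel, div_rpow hy.le hx.le, rpow_add_one hy.ne', rpow_add_one hx.ne',
      le_div_iff₀ (mul_pos (rpow_pos_of_pos hx α) hx)] at bernoulli
    refine le_of_eq_of_le ?_ bernoulli
    field_simp
  linarith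

theorem abs_rpow_mul_self_sub_le {α a b : ℝ} (hα : 0 ≤ α) (hba : |b| ≤ |a|) :
    |(|a| ^ α * a - |b| ^ α * b)| ≤ (1 + α) * |a| ^ α * |a - b| := by
  have hmono : |b| ^ α ≤ |a| ^ α := rpow_le_rpow (abs_nonneg b) hba hα
  have ha : 0 ≤ |a| ^ α := rpow_nonneg (abs_nonneg a) α
  calc |(|a| ^ α * a - |b| ^ α * b)|
      = |(|a| ^ α * (a - b) + (|a| ^ α - |b| ^ α) * b)| := by ring_nf
    _ ≤ |a| ^ α * |a - b| + (|a| ^ α - |b| ^ α) * |b| := by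
        grw [abs_add_le, abs_mul, abs_mul, abs_of_nonneg ha, abs_of_nonneg (sub_nonneg.2 hmono)]
    _ ≤ |a| ^ α * |a - b| + α * |a| ^ α * (|a| - |b|) := by
        grw [rpow_sub_rpow_mul_le hα (abs_nonneg b) hba]
    _ ≤ (1 + α) * |a| ^ α * |a - b| := by
        have := mul_le_mul_of_nonneg_left (abs_sub_abs_le_abs_sub a b) (mul_nonneg hα ha)
        linarith

theorem abs_rpow_mul_self_sub_le_of_abs_le {α R a b : ℝ} (hα : 0 ≤ α) (ha : |a| ≤ R)
    (hb : |b| ≤ R) : |(|a| ^ α * a - |b| ^ α * b)| ≤ (1 + α) * R ^ α * |a - b| := by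
  rcases le_total |b| |a| with hba | hab
  · grw [abs_rpow_mul_self_sub_le hα hba, ha]
  · grw [abs_sub_comm, abs_rpow_mul_self_sub_le hα hab, hb, abs_sub_comm]

theorem ae_norm_le_of_eLpNorm_top_le {X F : Type*} [MeasurableSpace X] {μ : Measure X}
    [NormedAddCommGroup F] {f : X → F} {r : ℝ} (hr : 0 ≤ r)
    (hf : eLpNorm f ∞ μ ≤ ENNReal.ofReal r) : ∀ᵐ x ∂μ, ‖f x‖ ≤ r := by
  rw [eLpNorm_exponent_top] at hf
  filter_upwards [ae_le_eLpNormEssSup (f := f)] with x hx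
  rw [← ofReal_le_ofReal_iff hr, ofReal_norm]
  exact hx.trans hf

theorem eLpNorm_abs_rpow_mul_self_sub_le {X : Type*} [MeasurableSpace X] {μ : Measure X}
    {α R : ℝ} (hα : 0 ≤ α) {f g : X → ℝ} (hf : ∀ᵐ x ∂μ, |f x| ≤ R)
    (hg : ∀ᵐ x ∂μ, |g x| ≤ R) (p : ℝ≥0∞) :
    eLpNorm (fun x => |f x| ^ α * f x - |g x| ^ α * g x) p μ ≤
      ENNReal.ofReal ((1 + α) * R ^ α) * eLpNorm (fun x => f x - g x) p μ := by
  refine eLpNorm_le_mul_eLpNorm_of_ae_le_mul ?_ p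
  filter_upwards [hf, hg] with x hfx hgx
  exact abs_rpow_mul_self_sub_le_of_abs_le hα hfx hgx

theorem odd_power_difference_Lp_decay_general (n : ℕ) (hn : 1 ≤ n) (p : ℝ≥0∞)
    (u G : ℝ → EuclideanSpace ℝ (Fin n) → ℝ) (M C₀ : ℝ) (hC₀ : 0 < C₀)
    (hu : ∀ t : ℝ, 1 ≤ t →
      eLpNorm (u t) ⊤ volume ≤ ENNReal.ofReal (C₀ * t ^ (-(n : ℝ) / 2)))
    (hG : ∀ t : ℝ, 1 ≤ t →
      eLpNorm (G t) ⊤ volume ≤ ENNReal.ofReal (C₀ * t ^ (-(n : ℝ) / 2)))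
    (hdiff : ∀ t : ℝ, 1 ≤ t →
      eLpNorm (fun x => u t x - M * G t x) p volume ≤
        ENNReal.ofReal (C₀ * t ^ (-(n : ℝ) / 2 * (1 - 1 / p.toReal) - 1 / 2) *
          Real.log (2 + t))) :
    ∃ C > 0, ∀ t : ℝ, 1 ≤ t →
      eLpNorm (fun x =>
          |u t x| ^ ((2 : ℝ) / n) * u t x - |M * G t x| ^ ((2 : ℝ) / n) * (M * G t x))
        p volume ≤
        ENNReal.ofReal (C * t ^ (-(n : ℝ) / 2 * (1 - 1 / p.toReal) - 3 / 2) *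
          Real.log (2 + t)) := by
  have hn0 : (n : ℝ) ≠ 0 := by exact_mod_cast Nat.one_le_iff_ne_zero.mp hn
  refine ⟨(1 + 2 / n) * ((1 + |M|) * C₀) ^ ((2 : ℝ) / n) * C₀, by positivity, fun t ht => ?_⟩
  have ht0 : 0 < t := by linarith
  set r := C₀ * t ^ (-(n : ℝ) / 2) with hr_def
  have hr : 0 ≤ r := by positivity
  have hu_bound : ∀ᵐ x, |u t x| ≤ (1 + |M|) * r := by
    filter_upwards [ae_norm_le_of_eLpNorm_top_le hr (hu t ht)] with x hx
    rw [norm_eq_abs] at hx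
    nlinarith [abs_nonneg M]
  have hMG_bound : ∀ᵐ x, |M * G t x| ≤ (1 + |M|) * r := by
    filter_upwards [ae_norm_le_of_eLpNorm_top_le hr (hG t ht)] with x hx
    rw [norm_eq_abs] at hx
    rw [abs_mul]
    nlinarith [abs_nonneg M]
  have hpow : ((1 + |M|) * r) ^ ((2 : ℝ) / n) =
      ((1 + |M|) * C₀) ^ ((2 : ℝ) / n) * t ^ (-1 : ℝ) := by
    have hexp : -(n : ℝ) / 2 * (2 / n) = -1 := by field_simp
    rw [hr_def, ← mul_assoc, mul_rpow (by positivity) (by positivity), ← rpow_mul ht0.le, hexp]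
  have htime : t ^ (-(n : ℝ) / 2 * (1 - 1 / p.toReal) - 3 / 2) =
      t ^ (-1 : ℝ) * t ^ (-(n : ℝ) / 2 * (1 - 1 / p.toReal) - 1 / 2) := by
    rw [← rpow_add ht0]
    ring_nf
  calc _ ≤ ENNReal.ofReal ((1 + 2 / n) * ((1 + |M|) * r) ^ ((2 : ℝ) / n)) *
        eLpNorm (fun x => u t x - M * G t x) p volume :=
        eLpNorm_abs_rpow_mul_self_sub_le (by positivity) hu_bound hMG_bound p
    _ ≤ _ := by grw [hdiff t ht]
    _ = _ := by
        rw [← ofReal_mul (by positivity), hpow, htime]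
        ring_nf

/-- Nonlinear difference estimate: the `L^p` norm of `|u|^{2/n}u - |MG|^{2/n}MG`
decays like `t^{-(n/2)(1-1/p)-3/2} log(2+t)`. -/
theorem odd_power_difference_Lp_decay (n : ℕ) (hn : 1 ≤ n) (p : ℝ≥0∞) (hp : 1 ≤ p)
    (u G : ℝ → EuclideanSpace ℝ (Fin n) → ℝ) (M C₀ : ℝ) (hC₀ : 0 < C₀)
    (hu : ∀ t : ℝ, 1 ≤ t →
      eLpNorm (u t) ⊤ volume ≤ ENNReal.ofReal (C₀ * t ^ (-(n : ℝ) / 2)))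
    (hG : ∀ t : ℝ, 1 ≤ t →
      eLpNorm (G t) ⊤ volume ≤ ENNReal.ofReal (C₀ * t ^ (-(n : ℝ) / 2)))
    (hdiff : ∀ t : ℝ, 1 ≤ t →
      eLpNorm (fun x => u t x - M * G t x) p volume ≤
        ENNReal.ofReal (C₀ * t ^ (-(n : ℝ) / 2 * (1 - 1 / p.toReal) - 1 / 2) *
          Real.log (2 + t))) :
    ∃ C > 0, ∀ t : ℝ, 1 ≤ t →
      eLpNorm (fun x =>
          |u t x| ^ ((2 : ℝ) / n) * u t x - |M * G t x| ^ ((2 : ℝ) / n) * (M * G t x))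
        p volume ≤
        ENNReal.ofReal (C * t ^ (-(n : ℝ) / 2 * (1 - 1 / p.toReal) - 3 / 2) *
          Real.log (2 + t)) :=
  odd_power_difference_Lp_decay_general n hn p u G M C₀ hC₀ hu hG hdiff
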